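/- Let (X,d,ν) be a metric measure space whose measure satisfies ν(B(x,λr)) ≤ C₁ λⁿ ν(B(x,r)) for all λ ≥ 1, r > 0 and x ∈ X, for some constants C₁ ≥ 1 and n > 0. Let (φ_t)_{t>0} be nonnegative measurable kernels on X×X satisfying the two-sided Gaussian bound C⁻¹ ν(B(x,√t))⁻¹ e^{−c₁ d(x,y)²/t} ≤ φ_t(x,y) ≤ C ν(B(x,√t))⁻¹ e^{−c₂ d(x,y)²/t} for all t > 0 and x,y ∈ X, where C ≥ 1 and c₁ ≥ c₂ > 0. Set γ = c₁/c₂. Then there exist α > 0 and a constant K such that for every R > 0, every measurable f ≥ 0 and every x ∈ X, sup_{0<t<R} ∫_X φ_t(x,y) f(y) dν(y) ≤ K M_{√(2αR)} f(x) + K ∫_X φ_{γR}(x,y) f(y) dν(y), where M_r f(x) = sup_{0<s<r} ν(B(x,s))⁻¹ ∫_{B(x,s)} |f| dν is the local Hardy–Littlewood maximal function. -/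

import Mathlib

open MeasureTheory Metric ENNReal

private lemma aux_pow_le_exp (p : ℕ) (x : ℝ) (hx : 0 ≤ x) : x ^ p ≤ (p:ℝ) ^ p * Real.exp x := by
  rcases Nat.eq_zero_or_pos p with rfl | hp
  · simpa using Real.one_le_exp hx
  have hp0 : (0:ℝ) < p := by exact_mod_cast hp
  have h1 : x / p ≤ Real.exp (x / p) := by
    have := Real.add_one_le_exp (x / p); linarith
  have h2 : (x / p) ^ p ≤ Real.exp (x / p) ^ p :=
    pow_le_pow_left₀ (by positivity) h1 p
  have h3 : Real.exp (x / p) ^ p = Real.exp x := by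
    rw [← Real.exp_nat_mul]; congr 1; field_simp
  calc x ^ p = (p:ℝ) ^ p * (x / p) ^ p := by
        rw [← mul_pow]; congr 1; field_simp
    _ ≤ (p:ℝ) ^ p * Real.exp x := by
        rw [← h3]; exact mul_le_mul_of_nonneg_left h2 (by positivity)

private lemma near_sum_term (C C₁ c₂ : ℝ) (m k : ℕ) (hC : 0 < C) (hC₁ : 0 < C₁) (hc₂ : 0 < c₂) :
    (C * Real.exp (c₂ * (1 - 4^k/8))) * (C₁ * 2^(k*m))
      ≤ (C * C₁ * Real.exp c₂ * (8*((m:ℝ)+1)/c₂)^(m+1)) * (1/2)^k := by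
  have key2 : (2:ℝ)^(k*m) * 2^k * Real.exp (-(c₂*4^k/8)) ≤ (8*((m:ℝ)+1)/c₂)^(m+1) := by
    have h1 := aux_pow_le_exp (m+1) (c₂*4^k/8) (by positivity)
    have h2 : ((4:ℝ)^k)^(m+1) ≤ (8*((m:ℝ)+1)/c₂)^(m+1) * Real.exp (c₂*4^k/8) := by
      have he : ((4:ℝ)^k)^(m+1) = (8/c₂)^(m+1) * (c₂*4^k/8)^(m+1) := by
        rw [← mul_pow]; congr 1; field_simp
      rw [he]
      calc (8/c₂)^(m+1) * (c₂*4^k/8)^(m+1)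
          ≤ (8/c₂)^(m+1) * ((((m:ℕ)+1 : ℕ):ℝ)^(m+1) * Real.exp (c₂*4^k/8)) :=
            mul_le_mul_of_nonneg_left h1 (by positivity)
        _ = (8*((m:ℝ)+1)/c₂)^(m+1) * Real.exp (c₂*4^k/8) := by
            rw [← mul_assoc, ← mul_pow]; push_cast; ring_nf
    have h3 : (2:ℝ)^(k*m) * 2^k ≤ ((4:ℝ)^k)^(m+1) := by
      have h4 : (4:ℝ)^k = 2^(2*k) := by rw [pow_mul]; norm_num
      rw [h4, ← pow_mul, ← pow_add]
      apply pow_le_pow_right₀ one_le_two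
      nlinarith [Nat.zero_le (k*m)]
    calc (2:ℝ)^(k*m) * 2^k * Real.exp (-(c₂*4^k/8))
        ≤ ((4:ℝ)^k)^(m+1) * Real.exp (-(c₂*4^k/8)) :=
          mul_le_mul_of_nonneg_right h3 (Real.exp_pos _).le
      _ ≤ ((8*((m:ℝ)+1)/c₂)^(m+1) * Real.exp (c₂*4^k/8)) * Real.exp (-(c₂*4^k/8)) :=
          mul_le_mul_of_nonneg_right h2 (Real.exp_pos _).le
      _ = (8*((m:ℝ)+1)/c₂)^(m+1) := by
          rw [mul_assoc, ← Real.exp_add]; simp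
  have he1 : Real.exp (c₂*(1 - 4^k/8)) = Real.exp c₂ * Real.exp (-(c₂*4^k/8)) := by
    rw [← Real.exp_add]; ring_nf
  have h2k : (0:ℝ) < 2^k := by positivity
  rw [show ((1:ℝ)/2)^k = 1/2^k by rw [div_pow, one_pow], mul_one_div, le_div_iff₀ h2k]
  calc (C * Real.exp (c₂ * (1 - 4^k/8))) * (C₁ * 2^(k*m)) * 2^k
      = (C * C₁ * Real.exp c₂) * ((2:ℝ)^(k*m) * 2^k * Real.exp (-(c₂*4^k/8))) := by
        rw [he1]; ring
    _ ≤ (C * C₁ * Real.exp c₂) * (8*((m:ℝ)+1)/c₂)^(m+1) :=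
        mul_le_mul_of_nonneg_left key2 (by positivity)

private lemma far_key (C C₁ c₁ c₂ n t R d Vt Vγ : ℝ) (m : ℕ)
    (hC : 1 ≤ C) (hC₁ : 1 ≤ C₁) (hc₂ : 0 < c₂) (hc : c₂ ≤ c₁) (hmn : n ≤ (m:ℝ)) (hn : 0 < n)
    (ht0 : 0 < t) (htR : t < R) (hd2 : R ≤ d^2)
    (hVt : 0 < Vt) (hVγ : 0 < Vγ)
    (hVle : Vγ ≤ C₁ * (Real.sqrt ((c₁/c₂)*R/t)) ^ n * Vt) :
    C * Vt⁻¹ * Real.exp (-(c₂ * d^2 / t)) ≤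
      (C^2 * C₁ * (c₁/c₂)^m * Real.exp c₂ * (2*(m:ℝ)/c₂)^m) *
        (C⁻¹ * Vγ⁻¹ * Real.exp (-(c₂ * d^2 / R))) := by
  have hC0 : (0:ℝ) < C := lt_of_lt_of_le one_pos hC
  have hc₁ : 0 < c₁ := lt_of_lt_of_le hc₂ hc
  have hγ1 : 1 ≤ c₁ / c₂ := (one_le_div hc₂).2 hc
  have hR : 0 < R := ht0.trans htR
  set K₂ : ℝ := C^2 * C₁ * (c₁/c₂)^m * Real.exp c₂ * (2*(m:ℝ)/c₂)^m with hK₂_def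
  set u : ℝ := R / t with hu_def
  have hu1 : 1 ≤ u := (one_le_div ht0).2 htR.le
  have hlam1 : 1 ≤ Real.sqrt ((c₁/c₂)*R/t) := by
    rw [show (1:ℝ) = Real.sqrt 1 from (Real.sqrt_one).symm]
    apply Real.sqrt_le_sqrt
    rw [mul_div_assoc]
    nlinarith
  have hlampow : (Real.sqrt ((c₁/c₂)*R/t)) ^ n ≤ (c₁/c₂)^m * u^m := by
    calc (Real.sqrt ((c₁/c₂)*R/t)) ^ n
        ≤ (Real.sqrt ((c₁/c₂)*R/t)) ^ (((2*m : ℕ)):ℝ) := by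
          apply Real.rpow_le_rpow_of_exponent_le hlam1
          push_cast; linarith
      _ = (Real.sqrt ((c₁/c₂)*R/t)) ^ (2*m : ℕ) := Real.rpow_natCast _ _
      _ = ((Real.sqrt ((c₁/c₂)*R/t)) ^ 2) ^ m := by rw [← pow_mul]
      _ = ((c₁/c₂)*R/t) ^ m := by rw [Real.sq_sqrt (by positivity)]
      _ = (c₁/c₂)^m * u^m := by rw [hu_def, mul_div_assoc, mul_pow]
  have hE : Real.exp (-(c₂ * d^2 / t)) ≤
      Real.exp (-(c₂ * d^2 / R)) * (Real.exp c₂ * Real.exp (-(c₂ * u))) := by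
    rw [← Real.exp_add, ← Real.exp_add]
    apply Real.exp_le_exp.2
    have e : c₂*d^2/t - c₂*d^2/R - (c₂*u - c₂) = c₂*(d^2-R)*(R-t)/(t*R) := by
      rw [hu_def]; field_simp
    have hnn : 0 ≤ c₂*(d^2-R)*(R-t)/(t*R) := by
      apply div_nonneg _ (by positivity)
      have h1 : 0 ≤ d^2 - R := by linarith
      have h2 : 0 ≤ R - t := by linarith
      positivity
    linarith
  have hpoly : u^m ≤ (2*(m:ℝ)/c₂)^m * Real.exp (c₂*u/2) := by
    have h1 := aux_pow_le_exp m (c₂*u/2) (by positivity)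
    calc u^m = (2/c₂)^m * (c₂*u/2)^m := by
          rw [← mul_pow]; congr 1; field_simp
      _ ≤ (2/c₂)^m * ((m:ℝ)^m * Real.exp (c₂*u/2)) :=
          mul_le_mul_of_nonneg_left h1 (by positivity)
      _ = (2*(m:ℝ)/c₂)^m * Real.exp (c₂*u/2) := by
          rw [← mul_assoc, ← mul_pow]; ring_nf
  have hmain : C^2 * Vγ * Real.exp (-(c₂ * d^2 / t)) ≤ K₂ * Vt * Real.exp (-(c₂ * d^2 / R)) := by
    calc C^2 * Vγ * Real.exp (-(c₂ * d^2 / t))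
        ≤ C^2 * (C₁ * ((c₁/c₂)^m * u^m) * Vt) *
            (Real.exp (-(c₂ * d^2 / R)) * (Real.exp c₂ * Real.exp (-(c₂ * u)))) := by
          apply mul_le_mul _ hE (Real.exp_pos _).le (by positivity)
          apply mul_le_mul_of_nonneg_left _ (by positivity)
          calc Vγ ≤ C₁ * (Real.sqrt ((c₁/c₂)*R/t)) ^ n * Vt := hVle
            _ ≤ C₁ * ((c₁/c₂)^m * u^m) * Vt := by
                apply mul_le_mul_of_nonneg_right _ hVt.le
                exact mul_le_mul_of_nonneg_left hlampow (by positivity)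
      _ ≤ C^2 * (C₁ * ((c₁/c₂)^m * ((2*(m:ℝ)/c₂)^m * Real.exp (c₂*u/2))) * Vt) *
            (Real.exp (-(c₂ * d^2 / R)) * (Real.exp c₂ * Real.exp (-(c₂ * u)))) := by
          gcongr
      _ = (K₂ * Vt * Real.exp (-(c₂ * d^2 / R))) * (Real.exp (c₂*u/2) * Real.exp (-(c₂*u))) := by
          rw [hK₂_def]; ring
      _ ≤ K₂ * Vt * Real.exp (-(c₂ * d^2 / R)) := by
          apply mul_le_of_le_one_right (by positivity)
          rw [← Real.exp_add]
          apply Real.exp_le_one_iff.2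
          nlinarith
  rw [show C * Vt⁻¹ * Real.exp (-(c₂ * d^2 / t)) = (C * Real.exp (-(c₂ * d^2 / t))) / Vt from by ring,
      show K₂ * (C⁻¹ * Vγ⁻¹ * Real.exp (-(c₂ * d^2 / R)))
        = (K₂ / C * Real.exp (-(c₂ * d^2 / R))) / Vγ from by ring,
      div_le_div_iff₀ hVt hVγ]
  have h2 : C * (C * Real.exp (-(c₂ * d^2 / t)) * Vγ)
      ≤ C * (K₂ / C * Real.exp (-(c₂ * d^2 / R)) * Vt) := by
    calc C * (C * Real.exp (-(c₂ * d^2 / t)) * Vγ)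
        = C^2 * Vγ * Real.exp (-(c₂ * d^2 / t)) := by ring
      _ ≤ K₂ * Vt * Real.exp (-(c₂ * d^2 / R)) := hmain
      _ = C * (K₂ / C * Real.exp (-(c₂ * d^2 / R)) * Vt) := by field_simp
  exact le_of_mul_le_mul_left h2 hC0


/-- Local Hardy–Littlewood maximal function `M_R f` (with respect to a measure `ν`). -/
noncomputable def locMax {X : Type*} [MetricSpace X] [MeasurableSpace X]
    (ν : Measure X) (R : ℝ) (f : X → ℝ) (x : X) : ℝ≥0∞ :=
  ⨆ (s : ℝ) (_ : s ∈ Set.Ioo 0 R),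
    (ν (ball x s))⁻¹ * ∫⁻ y in ball x s, ENNReal.ofReal |f y| ∂ν

set_option maxHeartbeats 2000000 in
/-- Time-space maximal inequality for kernels with two-sided Gaussian
bounds on a metric measure space with polynomial volume growth of exponent `n`:
`sup_{0<t<R} ∫ φ_t(x,y) f(y) dν(y) ≤ K M_{√(2αR)} f(x) + K ∫ φ_{γR}(x,y) f(y) dν(y)`,
with `γ = c₁/c₂`. -/
theorem stmt_10 {X : Type*} [MetricSpace X] [MeasurableSpace X] [BorelSpace X]
    [LocallyCompactSpace X] [SecondCountableTopology X]
    (ν : Measure X) (hRadon : ν.Regular)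
    (C₁ n : ℝ) (hC₁ : 1 ≤ C₁) (hn : 0 < n)
    (hgrowth : ∀ (x : X) (lam r : ℝ), 1 ≤ lam → 0 < r →
      ν (ball x (lam * r)) ≤ ENNReal.ofReal (C₁ * lam ^ n) * ν (ball x r))
    (hball : ∀ (x : X) (r : ℝ), 0 < r → 0 < ν (ball x r) ∧ ν (ball x r) < ∞)
    (φ : ℝ → X → X → ℝ)
    (hφ_meas : ∀ t : ℝ, 0 < t → Measurable (Function.uncurry (φ t)))
    (C c₁ c₂ : ℝ) (hC : 1 ≤ C) (hc₂ : 0 < c₂) (hc : c₂ ≤ c₁)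
    (hbound : ∀ t : ℝ, 0 < t → ∀ x y : X,
      C⁻¹ * (ν (ball x (Real.sqrt t))).toReal⁻¹ * Real.exp (-(c₁ * dist x y ^ 2 / t))
        ≤ φ t x y ∧
      φ t x y ≤ C * (ν (ball x (Real.sqrt t))).toReal⁻¹ *
        Real.exp (-(c₂ * dist x y ^ 2 / t))) :
    ∃ α : ℝ, 0 < α ∧ ∃ K : ℝ, 0 < K ∧
      ∀ R : ℝ, 0 < R → ∀ f : X → ℝ, Measurable f → (∀ y, 0 ≤ f y) → ∀ x : X,
        (⨆ (t : ℝ) (_ : t ∈ Set.Ioo 0 R), ∫⁻ y, ENNReal.ofReal (φ t x y * f y) ∂ν)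
          ≤ ENNReal.ofReal K * locMax ν (Real.sqrt (2 * α * R)) f x
            + ENNReal.ofReal K *
              ∫⁻ y, ENNReal.ofReal (φ ((c₁ / c₂) * R) x y * f y) ∂ν := by
  classical
  have hC0 : (0:ℝ) < C := lt_of_lt_of_le one_pos hC
  have hC₁0 : (0:ℝ) < C₁ := lt_of_lt_of_le one_pos hC₁
  have hc₁ : 0 < c₁ := lt_of_lt_of_le hc₂ hc
  have hγ1 : 1 ≤ c₁ / c₂ := (one_le_div hc₂).2 hc
  set m : ℕ := ⌈n⌉₊ with hm_def
  have hmn : n ≤ (m:ℝ) := Nat.le_ceil n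
  have hm1 : (1:ℝ) ≤ (m:ℝ) := by
    have : 1 ≤ m := Nat.one_le_iff_ne_zero.2 (by
      simp only [hm_def, ne_eq, Nat.ceil_eq_zero, not_le]; exact hn)
    exact_mod_cast this
  set D : ℝ := C * C₁ * Real.exp c₂ * (8*((m:ℝ)+1)/c₂)^(m+1) with hD_def
  set K₁ : ℝ := 2 * D with hK₁_def
  set K₂ : ℝ := C^2 * C₁ * (c₁/c₂)^m * Real.exp c₂ * (2*(m:ℝ)/c₂)^m with hK₂_def
  have hD0 : 0 < D := by positivity
  have hK₁0 : 0 < K₁ := by positivity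
  have hK₂0 : 0 < K₂ := by
    have h2m : (0:ℝ) < 2*(m:ℝ)/c₂ := by positivity
    positivity
  refine ⟨1, one_pos, max K₁ K₂, lt_max_of_lt_left hK₁0, ?_⟩
  intro R hR f hf hf0 x
  set M : ℝ≥0∞ := locMax ν (Real.sqrt (2 * 1 * R)) f x with hM_def
  have hγR : 0 < (c₁/c₂) * R := by positivity
  set I₂ : ℝ≥0∞ := ∫⁻ y, ENNReal.ofReal (φ ((c₁/c₂) * R) x y * f y) ∂ν with hI₂_def
  refine iSup₂_le fun t ht => ?_
  obtain ⟨ht0, htR⟩ := ht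
  have hsqR : 0 < Real.sqrt R := Real.sqrt_pos.2 hR
  have hrt : 0 < Real.sqrt t := Real.sqrt_pos.2 ht0
  have hrR : Real.sqrt t < Real.sqrt R := Real.sqrt_lt_sqrt ht0.le htR
  have hφt : Measurable fun y => φ t x y := (hφ_meas t ht0).comp measurable_prodMk_left
  have hφγ : Measurable fun y => φ ((c₁/c₂)*R) x y :=
    (hφ_meas _ hγR).comp measurable_prodMk_left
  obtain ⟨hμt0, hμttop⟩ := hball x (Real.sqrt t) hrt
  have hVt0 : 0 < (ν (ball x (Real.sqrt t))).toReal := ENNReal.toReal_pos hμt0.ne' hμttop.ne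
  -- near part
  have hnear : ∫⁻ y in ball x (Real.sqrt R), ENNReal.ofReal (φ t x y * f y) ∂ν
      ≤ ENNReal.ofReal K₁ * M := by
    set S : ℕ → Set X := fun k =>
      {y | dist y x < Real.sqrt R ∧ dist y x < 2^k * Real.sqrt t ∧
        (k = 0 ∨ 2^k * Real.sqrt t / 2 ≤ dist y x)} with hS_def
    have hcover : ball x (Real.sqrt R) ⊆ ⋃ k, S k := by
      intro y hy
      rw [mem_ball] at hy
      by_cases h0 : dist y x < Real.sqrt t
      · exact Set.mem_iUnion.2 ⟨0, hy, by simpa using h0, Or.inl rfl⟩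
      · push_neg at h0
        have hex : ∃ k : ℕ, dist y x < 2^k * Real.sqrt t := by
          obtain ⟨k, hk⟩ := pow_unbounded_of_one_lt (dist y x / Real.sqrt t) (one_lt_two (α := ℝ))
          exact ⟨k, by rwa [div_lt_iff₀ hrt] at hk⟩
        have hk := Nat.find_spec hex
        rcases hknat : Nat.find hex with _ | j
        · rw [hknat] at hk; simp only [pow_zero, one_mul] at hk; linarith
        · have hj : ¬ dist y x < 2^j * Real.sqrt t := Nat.find_min hex (by omega)
          push_neg at hj
          rw [hknat] at hk
          refine Set.mem_iUnion.2 ⟨j+1, hy, hk, Or.inr ?_⟩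
          rw [show (2:ℝ)^(j+1) * Real.sqrt t / 2 = 2^j * Real.sqrt t from by rw [pow_succ]; ring]
          exact hj
    have hkey : ∀ k : ℕ, ∫⁻ y in S k, ENNReal.ofReal (φ t x y * f y) ∂ν
        ≤ ENNReal.ofReal ((C * Real.exp (c₂ * (1 - 4^k/8))) * (C₁ * 2^(k*m))) * M := by
      intro k
      set ρ : ℝ := min (2^k * Real.sqrt t) (Real.sqrt R) with hρ_def
      have hρ0 : 0 < ρ := lt_min (by positivity) hsqR
      have hρr : Real.sqrt t ≤ ρ :=
        le_min (le_mul_of_one_le_left hrt.le (one_le_pow₀ one_le_two)) hrR.le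
      have hρR2 : ρ < Real.sqrt (2*1*R) :=
        (min_le_right _ _).trans_lt (Real.sqrt_lt_sqrt hR.le (by linarith))
      obtain ⟨hνρ0, hνρtop⟩ := hball x ρ hρ0
      have hgr : ν (ball x ρ) ≤ ENNReal.ofReal (C₁ * 2^(k*m)) * ν (ball x (Real.sqrt t)) := by
        have hlam1 : 1 ≤ ρ / Real.sqrt t := (one_le_div hrt).2 hρr
        have h := hgrowth x (ρ / Real.sqrt t) (Real.sqrt t) hlam1 hrt
        rw [div_mul_cancel₀ _ hrt.ne'] at h
        refine h.trans (mul_le_mul_left (ENNReal.ofReal_le_ofReal ?_) _)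
        apply mul_le_mul_of_nonneg_left _ hC₁0.le
        calc (ρ / Real.sqrt t) ^ n ≤ ((2:ℝ)^k) ^ n := by
              apply Real.rpow_le_rpow (by positivity) _ hn.le
              rw [div_le_iff₀ hrt]
              exact min_le_left _ _
          _ ≤ ((2:ℝ)^k) ^ ((m:ℕ):ℝ) :=
              Real.rpow_le_rpow_of_exponent_le (one_le_pow₀ one_le_two) hmn
          _ = 2^(k*m) := by rw [Real.rpow_natCast, ← pow_mul]
      have hc0 : ENNReal.ofReal (C₁ * 2^(k*m)) ≠ 0 := by
        simp only [ne_eq, ENNReal.ofReal_eq_zero, not_le]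
        positivity
      have hctop : ENNReal.ofReal (C₁ * 2^(k*m)) ≠ ⊤ := ENNReal.ofReal_ne_top
      have hinv : (ν (ball x (Real.sqrt t)))⁻¹
          ≤ ENNReal.ofReal (C₁ * 2^(k*m)) * (ν (ball x ρ))⁻¹ := by
        have h := ENNReal.inv_le_inv.2 hgr
        rw [ENNReal.mul_inv (Or.inl hc0) (Or.inl hctop)] at h
        calc (ν (ball x (Real.sqrt t)))⁻¹
            = ENNReal.ofReal (C₁ * 2^(k*m)) *
              ((ENNReal.ofReal (C₁ * 2^(k*m)))⁻¹ * (ν (ball x (Real.sqrt t)))⁻¹) := by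
              rw [← mul_assoc, ENNReal.mul_inv_cancel hc0 hctop, one_mul]
          _ ≤ _ := mul_le_mul_right h _
      have hpt : ∀ y ∈ S k, ENNReal.ofReal (φ t x y * f y) ≤
          (ENNReal.ofReal (C * Real.exp (c₂*(1 - 4^k/8))) * (ν (ball x (Real.sqrt t)))⁻¹)
            * ENNReal.ofReal (f y) := by
        intro y hy
        obtain ⟨hy1, hy2, hy3⟩ := hy
        have hexp : Real.exp (-(c₂ * dist x y ^2 / t)) ≤ Real.exp (c₂*(1 - 4^k/8)) := by
          apply Real.exp_le_exp.2
          rcases hy3 with h0 | hlow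
          · subst h0
            have h1 : 0 ≤ c₂ * dist x y ^2 / t := by positivity
            have h40 : ((4:ℝ)^(0:ℕ)) = 1 := by norm_num
            rw [h40]
            nlinarith
          · have hd0 : (0:ℝ) ≤ 2^k * Real.sqrt t / 2 := by positivity
            have hsq := mul_self_le_mul_self hd0 hlow
            have hrs : Real.sqrt t * Real.sqrt t = t := Real.mul_self_sqrt ht0.le
            have h4 : (4:ℝ)^k = 2^k * 2^k := by rw [← mul_pow]; norm_num
            have hdc : dist x y = dist y x := dist_comm x y
            have hd2 : 4^k * t / 4 ≤ dist x y ^ 2 := by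
              rw [hdc, sq]
              nlinarith
            have ht4 : 4^k/8 - 1 ≤ dist x y ^2 / t := by
              have h44 : (4:ℝ)^k/4 ≤ dist x y^2/t := by
                rw [le_div_iff₀ ht0]; linarith
              have h48 : (0:ℝ) ≤ (4:ℝ)^k := by positivity
              linarith
            calc -(c₂ * dist x y ^2 / t) ≤ -(c₂ * (4^k/8 - 1)) := by
                  have hh : c₂ * (4^k/8 - 1) ≤ c₂ * (dist x y^2/t) :=
                    mul_le_mul_of_nonneg_left ht4 hc₂.le
                  rw [mul_div_assoc]; linarith
              _ = c₂ * (1 - 4^k/8) := by ring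
        have hb := (hbound t ht0 x y).2
        have hφle : φ t x y ≤
            (C * Real.exp (c₂*(1 - 4^k/8))) * (ν (ball x (Real.sqrt t))).toReal⁻¹ := by
          calc φ t x y ≤ C * (ν (ball x (Real.sqrt t))).toReal⁻¹ *
                Real.exp (-(c₂ * dist x y ^2 / t)) := hb
            _ ≤ C * (ν (ball x (Real.sqrt t))).toReal⁻¹ * Real.exp (c₂*(1 - 4^k/8)) :=
                mul_le_mul_of_nonneg_left hexp (by positivity)
            _ = (C * Real.exp (c₂*(1 - 4^k/8))) * (ν (ball x (Real.sqrt t))).toReal⁻¹ := by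
                ring
        calc ENNReal.ofReal (φ t x y * f y)
            ≤ ENNReal.ofReal ((C * Real.exp (c₂*(1 - 4^k/8))) *
                (ν (ball x (Real.sqrt t))).toReal⁻¹ * f y) :=
              ENNReal.ofReal_le_ofReal (mul_le_mul_of_nonneg_right hφle (hf0 y))
          _ = (ENNReal.ofReal (C * Real.exp (c₂*(1 - 4^k/8))) *
                ENNReal.ofReal ((ν (ball x (Real.sqrt t))).toReal⁻¹)) * ENNReal.ofReal (f y) := by
              rw [ENNReal.ofReal_mul (by positivity), ENNReal.ofReal_mul (by positivity)]
          _ = _ := by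
              rw [ENNReal.ofReal_inv_of_pos hVt0, ENNReal.ofReal_toReal hμttop.ne]
      have hSsub : S k ⊆ ball x ρ := fun y hy => mem_ball.2 (lt_min hy.2.1 hy.1)
      have hMb : (ν (ball x ρ))⁻¹ * ∫⁻ y in ball x ρ, ENNReal.ofReal (f y) ∂ν ≤ M := by
        rw [hM_def]
        unfold locMax
        refine le_iSup₂_of_le ρ ⟨hρ0, hρR2⟩ (le_of_eq ?_)
        congr 1
        apply lintegral_congr
        intro y
        rw [abs_of_nonneg (hf0 y)]
      calc ∫⁻ y in S k, ENNReal.ofReal (φ t x y * f y) ∂ν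
          ≤ ∫⁻ y in S k, (ENNReal.ofReal (C * Real.exp (c₂*(1 - 4^k/8))) *
              (ν (ball x (Real.sqrt t)))⁻¹) * ENNReal.ofReal (f y) ∂ν :=
            setLIntegral_mono (hf.ennreal_ofReal.const_mul _) hpt
        _ = (ENNReal.ofReal (C * Real.exp (c₂*(1 - 4^k/8))) * (ν (ball x (Real.sqrt t)))⁻¹) *
              ∫⁻ y in S k, ENNReal.ofReal (f y) ∂ν :=
            lintegral_const_mul _ hf.ennreal_ofReal
        _ ≤ (ENNReal.ofReal (C * Real.exp (c₂*(1 - 4^k/8))) *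
              (ENNReal.ofReal (C₁ * 2^(k*m)) * (ν (ball x ρ))⁻¹)) *
              ∫⁻ y in ball x ρ, ENNReal.ofReal (f y) ∂ν :=
            mul_le_mul (mul_le_mul_right hinv _) (lintegral_mono_set hSsub) (by positivity) (by positivity)
        _ = (ENNReal.ofReal (C * Real.exp (c₂*(1 - 4^k/8))) * ENNReal.ofReal (C₁ * 2^(k*m))) *
              ((ν (ball x ρ))⁻¹ * ∫⁻ y in ball x ρ, ENNReal.ofReal (f y) ∂ν) := by ring
        _ ≤ ENNReal.ofReal ((C * Real.exp (c₂*(1 - 4^k/8))) * (C₁ * 2^(k*m))) * M := by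
            conv_rhs => rw [ENNReal.ofReal_mul (by positivity)]
            exact mul_le_mul_right hMb _
    have hsum : (∑' k : ℕ, ENNReal.ofReal ((C * Real.exp (c₂ * (1 - 4^k/8))) * (C₁ * 2^(k*m))))
        ≤ ENNReal.ofReal K₁ := by
      calc (∑' k : ℕ, ENNReal.ofReal ((C * Real.exp (c₂ * (1 - 4^k/8))) * (C₁ * 2^(k*m))))
          ≤ ∑' k : ℕ, ENNReal.ofReal (D * (1/2)^k) :=
            ENNReal.tsum_le_tsum fun k =>
              ENNReal.ofReal_le_ofReal (near_sum_term C C₁ c₂ m k hC0 hC₁0 hc₂)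
        _ = ENNReal.ofReal (∑' k : ℕ, D * (1/2)^k) :=
            (ENNReal.ofReal_tsum_of_nonneg (fun k => by positivity)
              (Summable.mul_left D summable_geometric_two)).symm
        _ = ENNReal.ofReal (D * 2) := by rw [tsum_mul_left, tsum_geometric_two]
        _ = ENNReal.ofReal K₁ := by rw [hK₁_def, mul_comm]
    calc ∫⁻ y in ball x (Real.sqrt R), ENNReal.ofReal (φ t x y * f y) ∂ν
        ≤ ∫⁻ y in ⋃ k, S k, ENNReal.ofReal (φ t x y * f y) ∂ν := lintegral_mono_set hcover
      _ ≤ ∑' k : ℕ, ∫⁻ y in S k, ENNReal.ofReal (φ t x y * f y) ∂ν := lintegral_iUnion_le _ _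
      _ ≤ ∑' k : ℕ, ENNReal.ofReal ((C * Real.exp (c₂ * (1 - 4^k/8))) * (C₁ * 2^(k*m))) * M :=
          ENNReal.tsum_le_tsum hkey
      _ = (∑' k : ℕ, ENNReal.ofReal ((C * Real.exp (c₂ * (1 - 4^k/8))) * (C₁ * 2^(k*m)))) * M :=
          ENNReal.tsum_mul_right
      _ ≤ ENNReal.ofReal K₁ * M := mul_le_mul_left hsum M
  -- far part
  have hfar : ∫⁻ y in (ball x (Real.sqrt R))ᶜ, ENNReal.ofReal (φ t x y * f y) ∂ν
      ≤ ENNReal.ofReal K₂ * I₂ := by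
    have hptfar : ∀ y ∈ (ball x (Real.sqrt R))ᶜ, ENNReal.ofReal (φ t x y * f y) ≤
        ENNReal.ofReal (K₂ * (φ ((c₁/c₂)*R) x y * f y)) := by
      intro y hy
      apply ENNReal.ofReal_le_ofReal
      have hd : Real.sqrt R ≤ dist x y := by
        rw [Set.mem_compl_iff, mem_ball, not_lt] at hy
        rwa [dist_comm]
      have hd2 : R ≤ dist x y ^ 2 := by
        have h1 := Real.sq_sqrt hR.le
        nlinarith [Real.sqrt_nonneg R]
      obtain ⟨hμγ0, hμγtop⟩ := hball x (Real.sqrt ((c₁/c₂)*R)) (Real.sqrt_pos.2 hγR)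
      have hVγ0 : 0 < (ν (ball x (Real.sqrt ((c₁/c₂)*R)))).toReal :=
        ENNReal.toReal_pos hμγ0.ne' hμγtop.ne
      have hVle : (ν (ball x (Real.sqrt ((c₁/c₂)*R)))).toReal ≤
          C₁ * (Real.sqrt ((c₁/c₂)*R/t)) ^ n * (ν (ball x (Real.sqrt t))).toReal := by
        have hu1 : (1:ℝ) ≤ R/t := (one_le_div ht0).2 htR.le
        have hlam1 : 1 ≤ Real.sqrt ((c₁/c₂)*R/t) := by
          rw [show (1:ℝ) = Real.sqrt 1 from Real.sqrt_one.symm]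
          apply Real.sqrt_le_sqrt
          rw [mul_div_assoc]
          nlinarith
        have hmul : Real.sqrt ((c₁/c₂)*R/t) * Real.sqrt t = Real.sqrt ((c₁/c₂)*R) := by
          rw [← Real.sqrt_mul (by positivity) t, div_mul_cancel₀ _ ht0.ne']
        have h := hgrowth x (Real.sqrt ((c₁/c₂)*R/t)) (Real.sqrt t) hlam1 hrt
        rw [hmul] at h
        have htop : ENNReal.ofReal (C₁ * Real.sqrt ((c₁/c₂)*R/t) ^ n) *
            ν (ball x (Real.sqrt t)) ≠ ⊤ :=
          ENNReal.mul_ne_top ENNReal.ofReal_ne_top hμttop.ne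
        have h2 := ENNReal.toReal_mono htop h
        rwa [ENNReal.toReal_mul, ENNReal.toReal_ofReal (by positivity)] at h2
      have key : φ t x y ≤ K₂ * φ ((c₁/c₂)*R) x y := by
        have hb1 := (hbound t ht0 x y).2
        have hb2 := (hbound ((c₁/c₂)*R) hγR x y).1
        have hexp_eq : c₁ * dist x y ^2 / ((c₁/c₂)*R) = c₂ * dist x y ^2 / R := by
          field_simp
        rw [hexp_eq] at hb2
        calc φ t x y
            ≤ C * (ν (ball x (Real.sqrt t))).toReal⁻¹ * Real.exp (-(c₂ * dist x y ^2 / t)) := hb1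
          _ ≤ K₂ * (C⁻¹ * (ν (ball x (Real.sqrt ((c₁/c₂)*R)))).toReal⁻¹ *
                Real.exp (-(c₂ * dist x y ^2 / R))) :=
              far_key C C₁ c₁ c₂ n t R (dist x y) _ _ m hC hC₁ hc₂ hc hmn hn ht0 htR hd2
                hVt0 hVγ0 hVle
          _ ≤ K₂ * φ ((c₁/c₂)*R) x y := mul_le_mul_of_nonneg_left hb2 hK₂0.le
      calc φ t x y * f y ≤ (K₂ * φ ((c₁/c₂)*R) x y) * f y :=
            mul_le_mul_of_nonneg_right key (hf0 y)
        _ = K₂ * (φ ((c₁/c₂)*R) x y * f y) := by ring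
    calc ∫⁻ y in (ball x (Real.sqrt R))ᶜ, ENNReal.ofReal (φ t x y * f y) ∂ν
        ≤ ∫⁻ y in (ball x (Real.sqrt R))ᶜ, ENNReal.ofReal (K₂ * (φ ((c₁/c₂)*R) x y * f y)) ∂ν :=
          setLIntegral_mono ((measurable_const.mul (hφγ.mul hf)).ennreal_ofReal) hptfar
      _ ≤ ∫⁻ y, ENNReal.ofReal (K₂ * (φ ((c₁/c₂)*R) x y * f y)) ∂ν :=
          (lintegral_mono_set (Set.subset_univ _)).trans (le_of_eq (by rw [Measure.restrict_univ]))
      _ = ENNReal.ofReal K₂ * I₂ := by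
          rw [hI₂_def, ← lintegral_const_mul _ (f := fun y => ENNReal.ofReal (φ ((c₁/c₂)*R) x y * f y))
            ((hφγ.mul hf).ennreal_ofReal)]
          apply lintegral_congr
          intro y
          rw [ENNReal.ofReal_mul hK₂0.le]
  calc ∫⁻ y, ENNReal.ofReal (φ t x y * f y) ∂ν
      = (∫⁻ y in ball x (Real.sqrt R), ENNReal.ofReal (φ t x y * f y) ∂ν)
        + ∫⁻ y in (ball x (Real.sqrt R))ᶜ, ENNReal.ofReal (φ t x y * f y) ∂ν :=
        (lintegral_add_compl _ measurableSet_ball).symm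
    _ ≤ ENNReal.ofReal K₁ * M + ENNReal.ofReal K₂ * I₂ := add_le_add hnear hfar
    _ ≤ ENNReal.ofReal (max K₁ K₂) * M + ENNReal.ofReal (max K₁ K₂) * I₂ :=
        add_le_add (mul_le_mul_left (ENNReal.ofReal_le_ofReal (le_max_left _ _)) M)
          (mul_le_mul_left (ENNReal.ofReal_le_ofReal (le_max_right _ _)) I₂)
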